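/- The nonlocal pre-perimeter is submodular: P̃er_ε(A∪B;μ) + P̃er_ε(A∩B;μ) ≤ P̃er_ε(A;μ) + P̃er_ε(B;μ) for all Borel sets A, B ⊆ X. -/

import Mathlib

/-! The integrands of `prePerimeter A` are the indicators of the outer and inner
`ε`-boundaries `thickening ε A \ A` and `thickening ε Aᶜ \ Aᶜ`, so the pre-perimeter is a
weighted sum of measures of these sets. Submodularity then comes from the modularity
`μ (P ∪ Q) + μ (P ∩ Q) = μ P + μ Q` of a measure and the inclusions
`∂(A ∪ B) ∪ ∂(A ∩ B) ⊆ ∂A ∪ ∂B`, `∂(A ∪ B) ∩ ∂(A ∩ B) ⊆ ∂A ∩ ∂B` for `∂A = thickening ε A \ A`,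
which hold because `thickening ε` preserves unions and is monotone; the inner boundaries are
handled by the same inclusions applied to `Aᶜ`, `Bᶜ`. -/

open Set Metric MeasureTheory

/-- The nonlocal pre-perimeter
`P̃er_ε(A;μ) = (w₀/ε)∫(sup_{B_ε(·)}1_A − 1_A)dρ₀ + (w₁/ε)∫(1_A − inf_{B_ε(·)}1_A)dρ₁`. -/
noncomputable def prePerimeter {X : Type*} [MetricSpace X] [MeasurableSpace X]
    (ρ₀ ρ₁ : Measure X) (w₀ w₁ ε : ℝ) (A : Set X) : ℝ :=
  (w₀ / ε) * ∫ x, (sSup (A.indicator (fun _ => (1 : ℝ)) '' ball x ε) -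
      A.indicator (fun _ => (1 : ℝ)) x) ∂ρ₀ +
  (w₁ / ε) * ∫ x, (A.indicator (fun _ => (1 : ℝ)) x -
      sInf (A.indicator (fun _ => (1 : ℝ)) '' ball x ε)) ∂ρ₁

section Thickening

variable {X : Type*} [PseudoMetricSpace X] {ε : ℝ}

theorem sSup_indicator_image_ball (hε : 0 < ε) (A : Set X) (x : X) :
    sSup (A.indicator (fun _ => (1 : ℝ)) '' ball x ε) =
      (thickening ε A).indicator (fun _ => 1) x := by
  apply IsGreatest.csSup_eq
  by_cases hx : x ∈ thickening ε A
  · obtain ⟨z, hzA, hxz⟩ := mem_thickening_iff.1 hx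
    rw [indicator_of_mem hx]
    refine ⟨⟨z, mem_ball_comm.1 hxz, indicator_of_mem hzA _⟩, ?_⟩
    rintro _ ⟨y, -, rfl⟩
    exact indicator_apply_le' (fun _ => le_rfl) fun _ => zero_le_one
  · rw [indicator_of_notMem hx]
    refine ⟨⟨x, mem_ball_self hε,
      indicator_of_notMem (fun hxA => hx (self_subset_thickening hε A hxA)) _⟩, ?_⟩
    rintro _ ⟨y, hy, rfl⟩
    exact (indicator_of_notMem (fun hyA => hx (mem_thickening_iff.2 ⟨y, hyA, mem_ball'.1 hy⟩)) _).le

theorem sInf_indicator_image_ball (hε : 0 < ε) (A : Set X) (x : X) :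
    sInf (A.indicator (fun _ => (1 : ℝ)) '' ball x ε) =
      (thickening ε Aᶜ)ᶜ.indicator (fun _ => 1) x := by
  apply IsLeast.csInf_eq
  by_cases hx : x ∈ thickening ε Aᶜ
  · obtain ⟨z, hzA, hxz⟩ := mem_thickening_iff.1 hx
    rw [indicator_of_notMem (notMem_compl_iff.2 hx)]
    refine ⟨⟨z, mem_ball_comm.1 hxz, indicator_of_notMem hzA _⟩, ?_⟩
    rintro _ ⟨y, -, rfl⟩
    exact indicator_nonneg (fun _ _ => zero_le_one) y
  · rw [indicator_of_mem hx]
    have hxA : x ∈ A := not_not.1 fun hxA => hx (self_subset_thickening hε Aᶜ hxA)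
    refine ⟨⟨x, mem_ball_self hε, indicator_of_mem hxA _⟩, ?_⟩
    rintro _ ⟨y, hy, rfl⟩
    have hyA : y ∈ A := not_not.1 fun hyA => hx (mem_thickening_iff.2 ⟨y, hyA, mem_ball'.1 hy⟩)
    exact (indicator_of_mem hyA (fun _ => (1 : ℝ))).ge

theorem sSup_indicator_image_ball_sub_indicator (hε : 0 < ε) (A : Set X) (x : X) :
    sSup (A.indicator (fun _ => (1 : ℝ)) '' ball x ε) - A.indicator (fun _ => 1) x =
      (thickening ε A \ A).indicator (fun _ => 1) x := by
  rw [sSup_indicator_image_ball hε, indicator_sdiff (self_subset_thickening hε A)]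
  rfl

theorem indicator_sub_sInf_indicator_image_ball (hε : 0 < ε) (A : Set X) (x : X) :
    A.indicator (fun _ => (1 : ℝ)) x - sInf (A.indicator (fun _ => 1) '' ball x ε) =
      (thickening ε Aᶜ \ Aᶜ).indicator (fun _ => 1) x := by
  rw [sInf_indicator_image_ball hε, sdiff_compl, inter_comm, ← sdiff_compl,
    indicator_sdiff (compl_subset_comm.1 (self_subset_thickening hε Aᶜ))]
  rfl

theorem thickening_sdiff_union_subset (A B : Set X) :
    (thickening ε (A ∪ B) \ (A ∪ B)) ∪ (thickening ε (A ∩ B) \ (A ∩ B)) ⊆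
      (thickening ε A \ A) ∪ (thickening ε B \ B) := by
  intro x hx
  have hA := thickening_subset_of_subset ε (inter_subset_left : A ∩ B ⊆ A) (a := x)
  have hB := thickening_subset_of_subset ε (inter_subset_right : A ∩ B ⊆ B) (a := x)
  simp only [thickening_union, mem_union, mem_sdiff, mem_inter_iff] at hx hA hB ⊢
  tauto

theorem thickening_sdiff_inter_subset (A B : Set X) :
    (thickening ε (A ∪ B) \ (A ∪ B)) ∩ (thickening ε (A ∩ B) \ (A ∩ B)) ⊆
      (thickening ε A \ A) ∩ (thickening ε B \ B) := by
  intro x hx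
  have hA := thickening_subset_of_subset ε (inter_subset_left : A ∩ B ⊆ A) (a := x)
  have hB := thickening_subset_of_subset ε (inter_subset_right : A ∩ B ⊆ B) (a := x)
  simp only [mem_union, mem_sdiff, mem_inter_iff] at hx hA hB ⊢
  tauto

end Thickening

theorem measureReal_add_le_of_union_subset_of_inter_subset {α : Type*} [MeasurableSpace α]
    {μ : Measure α} [IsFiniteMeasure μ] {P Q R T : Set α} (hQ : MeasurableSet Q)
    (hT : MeasurableSet T) (hunion : P ∪ Q ⊆ R ∪ T) (hinter : P ∩ Q ⊆ R ∩ T) :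
    μ.real P + μ.real Q ≤ μ.real R + μ.real T := by
  rw [← measureReal_union_add_inter hQ, ← measureReal_union_add_inter hT]
  exact add_le_add (measureReal_mono hunion) (measureReal_mono hinter)

theorem measurableSet_thickening_sdiff {X : Type*} [PseudoMetricSpace X] [MeasurableSpace X]
    [OpensMeasurableSpace X] (ε : ℝ) {A : Set X} (hA : MeasurableSet A) :
    MeasurableSet (thickening ε A \ A) :=
  isOpen_thickening.measurableSet.diff hA

theorem prePerimeter_eq_measureReal {X : Type*} [MetricSpace X] [MeasurableSpace X]
    [OpensMeasurableSpace X] (ρ₀ ρ₁ : Measure X) (w₀ w₁ : ℝ) {ε : ℝ} (hε : 0 < ε) {A : Set X}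
    (hA : MeasurableSet A) :
    prePerimeter ρ₀ ρ₁ w₀ w₁ ε A =
      w₀ / ε * ρ₀.real (thickening ε A \ A) + w₁ / ε * ρ₁.real (thickening ε Aᶜ \ Aᶜ) := by
  simp only [prePerimeter, sSup_indicator_image_ball_sub_indicator hε,
    indicator_sub_sInf_indicator_image_ball hε]
  simp only [← Pi.one_def, integral_indicator_one (measurableSet_thickening_sdiff ε hA),
    integral_indicator_one (measurableSet_thickening_sdiff ε hA.compl)]

theorem prePerimeter_submodular_general {X : Type*} [MetricSpace X] [MeasurableSpace X] [BorelSpace X]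
    (ρ₀ ρ₁ : Measure X) [IsProbabilityMeasure ρ₀] [IsProbabilityMeasure ρ₁]
    (w₀ w₁ : ℝ) (hw₀ : 0 ≤ w₀) (hw₁ : 0 ≤ w₁)
    (ε : ℝ) (hε : 0 < ε)
    (A B : Set X) (hA : MeasurableSet A) (hB : MeasurableSet B) :
    prePerimeter ρ₀ ρ₁ w₀ w₁ ε (A ∪ B) + prePerimeter ρ₀ ρ₁ w₀ w₁ ε (A ∩ B) ≤
      prePerimeter ρ₀ ρ₁ w₀ w₁ ε A + prePerimeter ρ₀ ρ₁ w₀ w₁ ε B := by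
  simp only [prePerimeter_eq_measureReal ρ₀ ρ₁ w₀ w₁ hε, hA, hB, hA.union hB, hA.inter hB,
    compl_union, compl_inter]
  have outer := measureReal_add_le_of_union_subset_of_inter_subset (μ := ρ₀)
    (measurableSet_thickening_sdiff ε (hA.inter hB)) (measurableSet_thickening_sdiff ε hB)
    (thickening_sdiff_union_subset A B) (thickening_sdiff_inter_subset A B)
  have inner := measureReal_add_le_of_union_subset_of_inter_subset (μ := ρ₁)
    (measurableSet_thickening_sdiff ε (hA.compl.inter hB.compl))
    (measurableSet_thickening_sdiff ε hB.compl)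
    (thickening_sdiff_union_subset Aᶜ Bᶜ) (thickening_sdiff_inter_subset Aᶜ Bᶜ)
  have := mul_le_mul_of_nonneg_left outer (div_nonneg hw₀ hε.le)
  have := mul_le_mul_of_nonneg_left inner (div_nonneg hw₁ hε.le)
  linarith

theorem prePerimeter_submodular {X : Type*} [MetricSpace X] [MeasurableSpace X] [BorelSpace X]
    [TopologicalSpace.SeparableSpace X]
    (ρ₀ ρ₁ : Measure X) [IsProbabilityMeasure ρ₀] [IsProbabilityMeasure ρ₁]
    (w₀ w₁ : ℝ) (hw₀ : 0 ≤ w₀) (hw₁ : 0 ≤ w₁)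
    (ε : ℝ) (hε : 0 < ε)
    (A B : Set X) (hA : MeasurableSet A) (hB : MeasurableSet B) :
    prePerimeter ρ₀ ρ₁ w₀ w₁ ε (A ∪ B) + prePerimeter ρ₀ ρ₁ w₀ w₁ ε (A ∩ B) ≤
      prePerimeter ρ₀ ρ₁ w₀ w₁ ε A + prePerimeter ρ₀ ρ₁ w₀ w₁ ε B :=
  prePerimeter_submodular_general ρ₀ ρ₁ w₀ w₁ hw₀ hw₁ ε hε A B hA hB
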